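/- Let A, B, B', C, C' ∈ ℂ^{r×r} with C + nI and C' + nI invertible for all integers n ≥ 0, CC' = C'C, and |x| + |y| < 1, and let s be a non-negative integer. (i) If B + kI is invertible for all integers k ≥ 0, then F₂(A, B+sI, B'; C, C'; x, y) = ∑_{k=0}^{s} (s choose k) (A)_k x^k ·[F₂(A+kI, B+kI, B'; C+kI, C'; x, y)]·(C)_k⁻¹. (ii) If B' + kI is invertible for all integers k ≥ 0, then F₂(A, B, B'+sI; C, C'; x, y) = ∑_{k=0}^{s} (s choose k) (A)_k y^k ·[F₂(A+kI, B, B'+kI; C, C'+kI; x, y)]·(C')_k⁻¹. (iii) If B − kI is invertible for all integers 1 ≤ k ≤ s, then F₂(A, B−sI, B'; C, C'; x, y) = ∑_{k=0}^{s} (s choose k) (A)_k (−x)^k ·[F₂(A+kI, B, B'; C+kI, C'; x, y)]·(C)_k⁻¹. (iv) If B' − kI is invertible for all integers 1 ≤ k ≤ s, then F₂(A, B, B'−sI; C, C'; x, y) = ∑_{k=0}^{s} (s choose k) (A)_k (−y)^k ·[F₂(A+kI, B, B'; C, C'+kI; x, y)]·(C')_k⁻¹. -/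

import Mathlib

/-!
Write `m^(k) = m(m-1)⋯(m-k+1)` for the falling factorial. Iterating
`(B+I)_m = (B)_m + m (B+I)_{m-1}` (all factors are polynomials in `B`, hence commute) gives the
binomial expansions `(B+sI)_m = ∑ₖ C(s,k) m^(k) (B+kI)_{m-k}` and
`(B-sI)_m = ∑ₖ (-1)ᵏ C(s,k) m^(k) (B)_{m-k}`. Inserted into the double series of `F₂`, the
`k`-th piece vanishes for `m < k`; after the shift `m ↦ m + k`, the identities
`(A)_{k+m} = (A)_k (A+kI)_m`, `(C)_{k+m} = (C)_k (C+kI)_m` and `(k+m)! = m! (k+m)^(k)` turn it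
into `x^k (A)_k F₂(A+kI, …; C+kI, …) (C)_k⁻¹`, where moving `(C)_k⁻¹` past `(C')_n⁻¹` uses
`CC' = C'C`; in `y` no commutation is needed. All these series converge absolutely for
`|x| + |y| < 1` because `‖(A)_n‖ = O(tⁿ n!)` and `‖(C)_n⁻¹‖ = O(tⁿ / n!)` for every `t > 1`.
-/

/-- The shifted factorial (Pochhammer) matrix: `(A)_0 = I`, `(A)_{n+1} = (A)_n (A + nI)`. -/
noncomputable def mPoch {r : ℕ} (A : Matrix (Fin r) (Fin r) ℂ) : ℕ → Matrix (Fin r) (Fin r) ℂ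
  | 0 => 1
  | n + 1 => mPoch A n * (A + (n : ℂ) • 1)

/-- The second Appell matrix function `F₂(A, B, B'; C, C'; x, y)`. -/
noncomputable def appellF2 {r : ℕ} (A B B' C C' : Matrix (Fin r) (Fin r) ℂ) (x y : ℂ) :
    Matrix (Fin r) (Fin r) ℂ :=
  ∑' p : ℕ × ℕ,
    (((p.1.factorial : ℂ) * (p.2.factorial : ℂ))⁻¹ * x ^ p.1 * y ^ p.2) •
      (mPoch A (p.1 + p.2) * mPoch B p.1 * mPoch B' p.2 * (mPoch C p.1)⁻¹ * (mPoch C' p.2)⁻¹)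

open Filter Finset Topology

lemma Nat.mul_sub_one_descFactorial (m k : ℕ) :
    m * (m - 1).descFactorial k = m.descFactorial (k + 1) := by
  cases m with
  | zero => simp
  | succ m => rw [Nat.add_sub_cancel, Nat.succ_descFactorial_succ]

lemma descFactorial_mul_inv_factorial_add {K : Type*} [Field K] [CharZero K] (k m : ℕ) :
    ((k + m).descFactorial k : K) * ((k + m).factorial : K)⁻¹ = (m.factorial : K)⁻¹ := by
  have h := Nat.factorial_mul_descFactorial (Nat.le_add_right k m)
  rw [Nat.add_sub_cancel_left] at h
  rw [← h]
  push_cast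
  field_simp

lemma exists_le_mul_of_eventually_mul_le_mul {u v : ℕ → ℝ} (hv : ∀ n, 0 < v n)
    (h : ∀ᶠ n in atTop, u (n + 1) * v n ≤ u n * v (n + 1)) : ∃ K, ∀ n, u n ≤ K * v n := by
  obtain ⟨N, hN⟩ := eventually_atTop.1 h
  have hanti : ∀ n ≥ N, u n / v n ≤ u N / v N := by
    intro n hn
    induction n, hn using Nat.le_induction with
    | base => exact le_rfl
    | succ n hn ih => exact ((div_le_div_iff₀ (hv _) (hv _)).2 (hN n hn)).trans ih
  obtain ⟨K, hK⟩ :=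
    (isBoundedUnder_of_eventually_le (eventually_atTop.2 ⟨N, hanti⟩)).bddAbove_range
  exact ⟨K, fun n => (div_le_iff₀ (hv n)).1 (hK ⟨n, rfl⟩)⟩

lemma summable_choose_mul_pow_mul_pow {a b : ℝ} (ha : 0 ≤ a) (hb : 0 ≤ b) (hab : a + b < 1) :
    Summable fun p : ℕ × ℕ => ((p.1 + p.2).choose p.1 : ℝ) * a ^ p.1 * b ^ p.2 := by
  have hgeo := summable_geometric_of_lt_one (by positivity) hab
  refine Summable.of_nonneg_of_le (fun _ => by positivity) (fun ⟨m, n⟩ => ?_)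
    (hgeo.mul_of_nonneg hgeo (fun _ => by positivity) fun _ => by positivity)
  rw [← pow_add, add_pow]
  have := single_le_sum (f := fun i => a ^ i * b ^ (m + n - i) * ((m + n).choose i : ℝ))
    (fun i _ => by positivity) (mem_range.2 (by omega : m < m + n + 1))
  simpa [mul_comm, mul_assoc, mul_left_comm] using this

lemma hasSum_of_hasSum_comp_add {κ M : Type*} [Add κ] [LE κ] [ExistsAddOfLE κ]
    [IsLeftCancelAdd κ] [AddCommMonoid M] [TopologicalSpace M] {f : κ → M} {a : M} (q : κ)
    (hf : ∀ p, ¬ q ≤ p → f p = 0) (h : HasSum (fun p => f (q + p)) a) : HasSum f a := by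
  refine ((add_right_injective q).hasSum_iff fun p hp => hf p fun hqp => hp ?_).1 h
  obtain ⟨c, rfl⟩ := exists_add_of_le hqp
  exact ⟨c, rfl⟩

section AppellF2

variable {r : ℕ}

local notation "Mat" => Matrix (Fin r) (Fin r) ℂ

lemma mPoch_succ (A : Mat) (n : ℕ) : mPoch A (n + 1) = mPoch A n * (A + (n : ℂ) • 1) := rfl

lemma mPoch_add (A : Mat) (m n : ℕ) :
    mPoch A (m + n) = mPoch A m * mPoch (A + (m : ℂ) • 1) n := by
  induction n with
  | zero => simp [mPoch]
  | succ n ih =>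
    rw [← add_assoc, mPoch_succ, ih, mPoch_succ, mul_assoc, add_assoc, ← add_smul]
    push_cast
    rfl

lemma Commute.mPoch_right {X Y : Mat} (h : Commute X Y) (n : ℕ) : Commute X (mPoch Y n) := by
  induction n with
  | zero => exact Commute.one_right X
  | succ n ih => exact ih.mul_right (h.add_right ((Commute.one_right X).smul_right _))

lemma Commute.mPoch_mPoch {X Y : Mat} (h : Commute X Y) (m n : ℕ) :
    Commute (mPoch X m) (mPoch Y n) := by
  induction m with
  | zero => exact Commute.one_left _
  | succ m ih =>
    exact ih.mul_left ((h.add_left ((Commute.one_left Y).smul_left _)).mPoch_right n)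

lemma mPoch_add_one (A : Mat) (m : ℕ) :
    mPoch (A + 1) m = mPoch A m + (m : ℂ) • mPoch (A + 1) (m - 1) := by
  cases m with
  | zero => simp [mPoch]
  | succ m =>
    have hcomm : Commute (mPoch (A + 1) m) A :=
      ((Commute.refl A).add_right (Commute.one_right A)).mPoch_right m |>.symm
    have hfirst : mPoch A (m + 1) = A * mPoch (A + 1) m := by
      rw [add_comm, mPoch_add]
      simp [mPoch]
    rw [mPoch_succ, hfirst, ← hcomm.eq, Nat.add_sub_cancel]
    push_cast
    simp only [add_smul, one_smul, mul_add, mul_smul_comm, mul_one]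
    abel

theorem mPoch_add_natCast_smul_one (s : ℕ) (B : Mat) (m : ℕ) :
    mPoch (B + (s : ℂ) • 1) m = ∑ k ∈ range (s + 1),
      (s.choose k : ℂ) • (m.descFactorial k : ℂ) • mPoch (B + (k : ℂ) • 1) (m - k) := by
  induction s generalizing B m with
  | zero => simp
  | succ s ih =>
    have hstep : mPoch (B + ((s + 1 : ℕ) : ℂ) • 1) m =
        mPoch (B + (s : ℂ) • 1) m + (m : ℂ) • mPoch ((B + 1) + (s : ℂ) • 1) (m - 1) := by
      rw [show (B + 1) + (s : ℂ) • 1 = (B + (s : ℂ) • 1) + 1 by abel, ← mPoch_add_one]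
      push_cast
      rw [add_smul, one_smul, add_assoc]
    have hshift : ∀ k, (m : ℂ) • (s.choose k : ℂ) • ((m - 1).descFactorial k : ℂ) •
          mPoch ((B + 1) + (k : ℂ) • 1) (m - 1 - k) =
        (s.choose k : ℂ) • (m.descFactorial (k + 1) : ℂ) •
          mPoch (B + ((k + 1 : ℕ) : ℂ) • 1) (m - (k + 1)) := by
      intro k
      rw [smul_comm, smul_smul (m : ℂ), ← Nat.cast_mul, Nat.mul_sub_one_descFactorial,
        Nat.sub_sub]
      push_cast
      rw [add_comm 1 k, add_smul, one_smul, add_right_comm, add_assoc]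
    rw [hstep, ih, ih, smul_sum, sum_congr rfl fun k _ => hshift k]
    simp only [Nat.cast_smul_eq_nsmul ℂ (Nat.choose _ _)]
    exact (sum_choose_succ_nsmul (fun k _ => (m.descFactorial k : ℂ) •
      mPoch (B + (k : ℂ) • 1) (m - k)) s).symm

theorem mPoch_sub_natCast_smul_one (s : ℕ) (B : Mat) (m : ℕ) :
    mPoch (B - (s : ℂ) • 1) m = ∑ k ∈ range (s + 1),
      (s.choose k : ℂ) • ((-1) ^ k * m.descFactorial k : ℂ) • mPoch B (m - k) := by
  induction s generalizing m with
  | zero => simp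
  | succ s ih =>
    have hstep : mPoch (B - ((s + 1 : ℕ) : ℂ) • 1) m =
        mPoch (B - (s : ℂ) • 1) m - (m : ℂ) • mPoch (B - (s : ℂ) • 1) (m - 1) := by
      have h := mPoch_add_one (B - ((s + 1 : ℕ) : ℂ) • 1) m
      rw [show B - ((s + 1 : ℕ) : ℂ) • 1 + 1 = B - (s : ℂ) • 1 by push_cast; module] at h
      rw [h, add_sub_cancel_right]
    have hshift : ∀ k, -((m : ℂ) • (s.choose k : ℂ) • ((-1) ^ k * (m - 1).descFactorial k : ℂ) •
          mPoch B (m - 1 - k)) =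
        (s.choose k : ℂ) • ((-1) ^ (k + 1) * m.descFactorial (k + 1) : ℂ) •
          mPoch B (m - (k + 1)) := by
      intro k
      rw [smul_comm, ← smul_neg, ← neg_smul, smul_smul (-(m : ℂ)), ← Nat.mul_sub_one_descFactorial,
        Nat.sub_sub]
      push_cast
      ring_nf
    rw [hstep, ih, ih, sub_eq_add_neg, smul_sum, ← sum_neg_distrib,
      sum_congr rfl fun k _ => hshift k]
    simp only [Nat.cast_smul_eq_nsmul ℂ (Nat.choose _ _)]
    exact (sum_choose_succ_nsmul (fun k _ => ((-1) ^ k * m.descFactorial k : ℂ) •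
      mPoch B (m - k)) s).symm

lemma isUnit_add_natCast_smul_one_add {C : Mat} (hC : ∀ n : ℕ, IsUnit (C + (n : ℂ) • 1))
    (k n : ℕ) :
    IsUnit ((C + (k : ℂ) • 1) + (n : ℂ) • 1) := by
  rw [add_assoc, ← add_smul, ← Nat.cast_add]
  exact hC (k + n)

noncomputable def appellF2Term (A B B' C C' : Mat) (x y : ℂ) (p : ℕ × ℕ) : Mat :=
  (((p.1.factorial : ℂ) * (p.2.factorial : ℂ))⁻¹ * x ^ p.1 * y ^ p.2) •
    (mPoch A (p.1 + p.2) * mPoch B p.1 * mPoch B' p.2 * (mPoch C p.1)⁻¹ * (mPoch C' p.2)⁻¹)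

section Convergence

-- Summability does not depend on the norm; any submultiplicative one with `‖1‖ ≤ 1` would do.
attribute [local instance] Matrix.linftyOpNormedRing Matrix.linftyOpNormedAlgebra

lemma Matrix.linfty_opNorm_one_le {n : Type*} [Fintype n] [DecidableEq n] :
    ‖(1 : Matrix n n ℂ)‖ ≤ 1 := by
  rw [← Matrix.diagonal_one, Matrix.linfty_opNorm_diagonal]
  exact (pi_norm_le_iff_of_nonneg zero_le_one).2 fun _ => norm_one.le

lemma norm_add_natCast_smul_one_le (A : Mat) (n : ℕ) : ‖A + (n : ℂ) • 1‖ ≤ ‖A‖ + n := by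
  refine (norm_add_le _ _).trans (add_le_add le_rfl ?_)
  rw [norm_smul, Complex.norm_natCast]
  exact mul_le_of_le_one_right n.cast_nonneg Matrix.linfty_opNorm_one_le

lemma norm_mPoch_le (A : Mat) {t : ℝ} (ht : 1 < t) :
    ∃ K, ∀ n, ‖mPoch A n‖ ≤ K * (t ^ n * n.factorial) := by
  refine exists_le_mul_of_eventually_mul_le_mul (fun n => by positivity) ?_
  filter_upwards [tendsto_natCast_atTop_atTop.eventually_ge_atTop (‖A‖ / (t - 1))] with n hn
  have hfactor : ‖A + (n : ℂ) • 1‖ ≤ t * (n + 1) := by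
    rw [div_le_iff₀ (by linarith)] at hn
    linarith [norm_add_natCast_smul_one_le A n]
  calc ‖mPoch A (n + 1)‖ * (t ^ n * n.factorial)
      ≤ ‖mPoch A n‖ * (t * (n + 1)) * (t ^ n * n.factorial) := by
        gcongr
        exact norm_mul_le_of_le le_rfl hfactor
    _ = ‖mPoch A n‖ * (t ^ (n + 1) * (n + 1).factorial) := by
        rw [pow_succ, Nat.factorial_succ]
        push_cast
        ring

lemma norm_inv_add_natCast_smul_one_le (C : Mat) {n : ℕ}
    (h : IsUnit (C + (n : ℂ) • 1)) (hn : ‖C‖ < n) : ‖(C + (n : ℂ) • 1)⁻¹‖ ≤ (n - ‖C‖)⁻¹ := by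
  set D := (C + (n : ℂ) • 1)⁻¹
  have hD : (n : ℂ) • D = 1 - C * D := by
    rw [eq_sub_iff_add_eq, ← Matrix.mul_nonsing_inv _ ((Matrix.isUnit_iff_isUnit_det _).1 h),
      add_mul, smul_mul_assoc, one_mul, add_comm]
  have hbound : n * ‖D‖ ≤ 1 + ‖C‖ * ‖D‖ := by
    calc n * ‖D‖ = ‖(n : ℂ) • D‖ := by rw [norm_smul, Complex.norm_natCast]
      _ ≤ 1 + ‖C‖ * ‖D‖ := by
        rw [hD]
        exact (norm_sub_le _ _).trans (add_le_add Matrix.linfty_opNorm_one_le (norm_mul_le _ _))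
  rw [← one_div, le_div_iff₀ (sub_pos.2 hn)]
  linarith [mul_comm ‖C‖ ‖D‖, mul_sub ‖D‖ n ‖C‖, mul_comm ‖D‖ n]

lemma norm_inv_mPoch_le (C : Mat) (hC : ∀ n : ℕ, IsUnit (C + (n : ℂ) • 1)) {t : ℝ} (ht : 1 < t) :
    ∃ K, ∀ n, ‖(mPoch C n)⁻¹‖ ≤ K * (t ^ n / n.factorial) := by
  refine exists_le_mul_of_eventually_mul_le_mul (fun n => by positivity) ?_
  filter_upwards [tendsto_natCast_atTop_atTop.eventually_ge_atTop ((1 + t * ‖C‖) / (t - 1))]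
    with n hn
  rw [div_le_iff₀ (by linarith)] at hn
  have hCn : ‖C‖ < n := by nlinarith [norm_nonneg C]
  have hfactor : ‖(C + (n : ℂ) • 1)⁻¹‖ ≤ t / (n + 1) := by
    refine (norm_inv_add_natCast_smul_one_le C (hC n) hCn).trans ?_
    rw [inv_eq_one_div, div_le_div_iff₀ (by linarith) (by positivity)]
    linarith
  calc ‖(mPoch C (n + 1))⁻¹‖ * (t ^ n / n.factorial)
      ≤ t / (n + 1) * ‖(mPoch C n)⁻¹‖ * (t ^ n / n.factorial) := by
        gcongr
        rw [mPoch_succ, Matrix.mul_inv_rev]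
        exact norm_mul_le_of_le hfactor le_rfl
    _ = ‖(mPoch C n)⁻¹‖ * (t ^ (n + 1) / (n + 1).factorial) := by
        rw [pow_succ, Nat.factorial_succ]
        push_cast
        field_simp

lemma summable_appellF2Term (A B B' C C' : Mat) (x y : ℂ)
    (hC : ∀ n : ℕ, IsUnit (C + (n : ℂ) • 1)) (hC' : ∀ n : ℕ, IsUnit (C' + (n : ℂ) • 1))
    (hxy : ‖x‖ + ‖y‖ < 1) : Summable (appellF2Term A B B' C C' x y) := by
  obtain ⟨t, hρ, ht⟩ : ∃ t : ℝ, t ^ 3 * (‖x‖ + ‖y‖) < 1 ∧ 1 < t := by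
    have hcont : Tendsto (fun t : ℝ => t ^ 3 * (‖x‖ + ‖y‖)) (𝓝[>] 1)
        (𝓝 (1 ^ 3 * (‖x‖ + ‖y‖))) :=
      ((continuous_pow 3).mul continuous_const).continuousWithinAt
    exact ((hcont.eventually (gt_mem_nhds (by simpa using hxy))).and self_mem_nhdsWithin).exists
  obtain ⟨KA, hKA⟩ := norm_mPoch_le A ht
  obtain ⟨KB, hKB⟩ := norm_mPoch_le B ht
  obtain ⟨KB', hKB'⟩ := norm_mPoch_le B' ht
  obtain ⟨KC, hKC⟩ := norm_inv_mPoch_le C hC ht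
  obtain ⟨KC', hKC'⟩ := norm_inv_mPoch_le C' hC' ht
  refine Summable.of_norm_bounded ((summable_choose_mul_pow_mul_pow (a := t ^ 3 * ‖x‖)
    (b := t ^ 3 * ‖y‖) (by positivity) (by positivity) (by linarith)).mul_left
    (KA * KB * KB' * KC * KC')) fun ⟨m, n⟩ => ?_
  have hmatrix := norm_mul_le_of_le (norm_mul_le_of_le (norm_mul_le_of_le
    (norm_mul_le_of_le (hKA (m + n)) (hKB m)) (hKB' n)) (hKC m)) (hKC' n)
  have hfact : ((m + n).factorial : ℝ) = (m + n).choose m * m.factorial * n.factorial := by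
    have h := Nat.choose_mul_factorial_mul_factorial (Nat.le_add_right m n)
    rw [Nat.add_sub_cancel_left] at h
    exact_mod_cast h.symm
  calc ‖appellF2Term A B B' C C' x y (m, n)‖
      ≤ ‖((m.factorial : ℂ) * n.factorial)⁻¹ * x ^ m * y ^ n‖ *
          (KA * (t ^ (m + n) * (m + n).factorial) * (KB * (t ^ m * m.factorial)) *
            (KB' * (t ^ n * n.factorial)) * (KC * (t ^ m / m.factorial)) *
            (KC' * (t ^ n / n.factorial))) := by
        rw [appellF2Term, norm_smul]
        exact mul_le_mul_of_nonneg_left hmatrix (norm_nonneg _)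
    _ = KA * KB * KB' * KC * KC' *
          ((m + n).choose m * (t ^ 3 * ‖x‖) ^ m * (t ^ 3 * ‖y‖) ^ n) := by
        simp only [norm_mul, norm_inv, norm_pow, Complex.norm_natCast, hfact]
        field_simp
        ring

end Convergence

theorem appellF2_eq_sum_of_mPoch_eq_sum_fst (A B' C C' D : Mat) (Bk : ℕ → Mat) (e : ℕ → ℂ)
    (x y : ℂ) (S : Finset ℕ)
    (hC : ∀ n : ℕ, IsUnit (C + (n : ℂ) • 1)) (hC' : ∀ n : ℕ, IsUnit (C' + (n : ℂ) • 1))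
    (hCC' : C * C' = C' * C) (hxy : ‖x‖ + ‖y‖ < 1)
    (hD : ∀ m, mPoch D m = ∑ k ∈ S, e k • (m.descFactorial k : ℂ) • mPoch (Bk k) (m - k)) :
    appellF2 A D B' C C' x y = ∑ k ∈ S, (e k * x ^ k) •
      (mPoch A k * appellF2 (A + (k : ℂ) • 1) (Bk k) B' (C + (k : ℂ) • 1) C' x y *
        (mPoch C k)⁻¹) := by
  refine HasSum.tsum_eq (f := appellF2Term A D B' C C' x y) ?_
  have hexpand : appellF2Term A D B' C C' x y = fun p => ∑ k ∈ S,
      (e k * p.1.descFactorial k * (((p.1.factorial : ℂ) * (p.2.factorial : ℂ))⁻¹ * x ^ p.1 *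
        y ^ p.2)) •
        (mPoch A (p.1 + p.2) * mPoch (Bk k) (p.1 - k) * mPoch B' p.2 * (mPoch C p.1)⁻¹ *
          (mPoch C' p.2)⁻¹) := by
    ext1 p
    simp only [appellF2Term, hD, mul_sum, sum_mul, smul_sum, smul_mul_assoc,
      mul_smul_comm, smul_smul]
    refine sum_congr rfl fun k _ => ?_
    congr 1
    ring
  rw [hexpand]
  refine hasSum_sum fun k _ => hasSum_of_hasSum_comp_add (k, 0) ?_ ?_
  · rintro ⟨m, n⟩ hkm
    have hmk : m < k := by
      by_contra h
      exact hkm ⟨by simpa using h, Nat.zero_le n⟩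
    simp [Nat.descFactorial_eq_zero_iff_lt.2 hmk]
  · have hF := (((summable_appellF2Term (A + (k : ℂ) • 1) (Bk k) B' (C + (k : ℂ) • 1) C' x y
      (isUnit_add_natCast_smul_one_add hC k) hC' hxy).hasSum.mul_left (mPoch A k)).mul_right
      (mPoch C k)⁻¹).const_smul (e k * x ^ k)
    refine hF.congr_fun fun ⟨m, n⟩ => ?_
    have hcomm : Commute (mPoch C k)⁻¹ (mPoch C' n)⁻¹ := by
      simpa only [Matrix.nonsing_inv_eq_ringInverse] using
        (Commute.mPoch_mPoch hCC' k n).ringInverse_ringInverse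
    simp only [Prod.mk_add_mk, zero_add, appellF2Term, mul_smul_comm, smul_mul_assoc, smul_smul]
    congr 1
    · rw [mul_inv, pow_add]
      linear_combination (e k * x ^ k * x ^ m * y ^ n * (n.factorial : ℂ)⁻¹) *
        descFactorial_mul_inv_factorial_add (K := ℂ) k m
    · rw [add_assoc, mPoch_add A k, Nat.add_sub_cancel_left, mPoch_add C k m, Matrix.mul_inv_rev]
      simp only [mul_assoc]
      rw [hcomm.eq]

theorem appellF2_eq_sum_of_mPoch_eq_sum_snd (A B C C' D : Mat) (Bk : ℕ → Mat) (e : ℕ → ℂ)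
    (x y : ℂ) (S : Finset ℕ)
    (hC : ∀ n : ℕ, IsUnit (C + (n : ℂ) • 1)) (hC' : ∀ n : ℕ, IsUnit (C' + (n : ℂ) • 1))
    (hxy : ‖x‖ + ‖y‖ < 1)
    (hD : ∀ n, mPoch D n = ∑ k ∈ S, e k • (n.descFactorial k : ℂ) • mPoch (Bk k) (n - k)) :
    appellF2 A B D C C' x y = ∑ k ∈ S, (e k * y ^ k) •
      (mPoch A k * appellF2 (A + (k : ℂ) • 1) B (Bk k) C (C' + (k : ℂ) • 1) x y *
        (mPoch C' k)⁻¹) := by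
  refine HasSum.tsum_eq (f := appellF2Term A B D C C' x y) ?_
  have hexpand : appellF2Term A B D C C' x y = fun p => ∑ k ∈ S,
      (e k * p.2.descFactorial k * (((p.1.factorial : ℂ) * (p.2.factorial : ℂ))⁻¹ * x ^ p.1 *
        y ^ p.2)) •
        (mPoch A (p.1 + p.2) * mPoch B p.1 * mPoch (Bk k) (p.2 - k) * (mPoch C p.1)⁻¹ *
          (mPoch C' p.2)⁻¹) := by
    ext1 p
    simp only [appellF2Term, hD, mul_sum, sum_mul, smul_sum, smul_mul_assoc,
      mul_smul_comm, smul_smul]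
    refine sum_congr rfl fun k _ => ?_
    congr 1
    ring
  rw [hexpand]
  refine hasSum_sum fun k _ => hasSum_of_hasSum_comp_add (0, k) ?_ ?_
  · rintro ⟨m, n⟩ hkn
    have hnk : n < k := by
      by_contra h
      exact hkn ⟨Nat.zero_le m, by simpa using h⟩
    simp [Nat.descFactorial_eq_zero_iff_lt.2 hnk]
  · have hF := (((summable_appellF2Term (A + (k : ℂ) • 1) B (Bk k) C (C' + (k : ℂ) • 1) x y
      hC (isUnit_add_natCast_smul_one_add hC' k) hxy).hasSum.mul_left (mPoch A k)).mul_right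
      (mPoch C' k)⁻¹).const_smul (e k * y ^ k)
    refine hF.congr_fun fun ⟨m, n⟩ => ?_
    simp only [Prod.mk_add_mk, zero_add, appellF2Term, mul_smul_comm, smul_mul_assoc, smul_smul]
    congr 1
    · rw [mul_inv, pow_add]
      linear_combination (e k * y ^ k * y ^ n * x ^ m * (m.factorial : ℂ)⁻¹) *
        descFactorial_mul_inv_factorial_add (K := ℂ) k n
    · rw [add_left_comm, mPoch_add A k, Nat.add_sub_cancel_left, mPoch_add C' k n,
        Matrix.mul_inv_rev]
      simp only [mul_assoc]

end AppellF2

theorem appellF2_recursion_B_binom {r : ℕ} (A B B' C C' : Matrix (Fin r) (Fin r) ℂ) (x y : ℂ)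
    (s : ℕ)
    (hC : ∀ n : ℕ, IsUnit (C + (n : ℂ) • (1 : Matrix (Fin r) (Fin r) ℂ)))
    (hC' : ∀ n : ℕ, IsUnit (C' + (n : ℂ) • (1 : Matrix (Fin r) (Fin r) ℂ)))
    (hCC' : C * C' = C' * C)
    (hxy : ‖x‖ + ‖y‖ < 1) :
    ((∀ k : ℕ, IsUnit (B + (k : ℂ) • (1 : Matrix (Fin r) (Fin r) ℂ))) →
      appellF2 A (B + (s : ℂ) • 1) B' C C' x y =
        ∑ k ∈ Finset.range (s + 1),
          ((s.choose k : ℂ) * x ^ k) •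
            (mPoch A k *
              appellF2 (A + (k : ℂ) • 1) (B + (k : ℂ) • 1) B' (C + (k : ℂ) • 1) C' x y *
              (mPoch C k)⁻¹)) ∧
    ((∀ k : ℕ, IsUnit (B' + (k : ℂ) • (1 : Matrix (Fin r) (Fin r) ℂ))) →
      appellF2 A B (B' + (s : ℂ) • 1) C C' x y =
        ∑ k ∈ Finset.range (s + 1),
          ((s.choose k : ℂ) * y ^ k) •
            (mPoch A k *
              appellF2 (A + (k : ℂ) • 1) B (B' + (k : ℂ) • 1) C (C' + (k : ℂ) • 1) x y *
              (mPoch C' k)⁻¹)) ∧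
    ((∀ k : ℕ, 1 ≤ k → k ≤ s → IsUnit (B - (k : ℂ) • (1 : Matrix (Fin r) (Fin r) ℂ))) →
      appellF2 A (B - (s : ℂ) • 1) B' C C' x y =
        ∑ k ∈ Finset.range (s + 1),
          ((s.choose k : ℂ) * (-x) ^ k) •
            (mPoch A k *
              appellF2 (A + (k : ℂ) • 1) B B' (C + (k : ℂ) • 1) C' x y *
              (mPoch C k)⁻¹)) ∧
    ((∀ k : ℕ, 1 ≤ k → k ≤ s → IsUnit (B' - (k : ℂ) • (1 : Matrix (Fin r) (Fin r) ℂ))) →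
      appellF2 A B (B' - (s : ℂ) • 1) C C' x y =
        ∑ k ∈ Finset.range (s + 1),
          ((s.choose k : ℂ) * (-y) ^ k) •
            (mPoch A k *
              appellF2 (A + (k : ℂ) • 1) B B' C (C' + (k : ℂ) • 1) x y *
              (mPoch C' k)⁻¹)) := by
  refine ⟨fun _ => ?_, fun _ => ?_, fun _ => ?_, fun _ => ?_⟩
  · exact appellF2_eq_sum_of_mPoch_eq_sum_fst A B' C C' _ (fun k => B + (k : ℂ) • 1)
      (fun k => s.choose k) x y _ hC hC' hCC' hxy (mPoch_add_natCast_smul_one s B)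
  · exact appellF2_eq_sum_of_mPoch_eq_sum_snd A B C C' _ (fun k => B' + (k : ℂ) • 1)
      (fun k => s.choose k) x y _ hC hC' hxy (mPoch_add_natCast_smul_one s B')
  · rw [appellF2_eq_sum_of_mPoch_eq_sum_fst A B' C C' _ (fun _ => B)
      (fun k => s.choose k * (-1) ^ k) x y _ hC hC' hCC' hxy fun m => ?_]
    · exact sum_congr rfl fun k _ => by rw [neg_pow x, mul_assoc]
    · exact (mPoch_sub_natCast_smul_one s B m).trans
        (sum_congr rfl fun k _ => by rw [smul_smul, smul_smul, mul_assoc])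
  · rw [appellF2_eq_sum_of_mPoch_eq_sum_snd A B C C' _ (fun _ => B')
      (fun k => s.choose k * (-1) ^ k) x y _ hC hC' hxy fun n => ?_]
    · exact sum_congr rfl fun k _ => by rw [neg_pow y, mul_assoc]
    · exact (mPoch_sub_natCast_smul_one s B' n).trans
        (sum_congr rfl fun k _ => by rw [smul_smul, smul_smul, mul_assoc])
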